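/- Let T and T' be full binary rooted trees on the same finite leaf set L, let f : V(T) → ℕ_{>0} and f' : V(T') → ℕ_{>0}, and let c_0 ∈ ℕ be such that for every vertex v' of T', either des_{T'}(v') or anti_{T'}(v') is the union of at most c_0 doad sets of T. Let c ∈ ℕ with c > c_0. Then there exists r_0 ∈ ℕ such that for all r ≥ r_0, for every family of finite-dimensional vector spaces (V_ℓ)_{ℓ∈L} over a field K and every tensor t ∈ ⨂_{ℓ∈L} V_ℓ satisfying rk_{des_T(v)}(t) ≤ r·f(v) for all v ∈ V(T), one has rk_{des_{T'}(v')}(t) ≤ r^c·f'(v') for all v' ∈ V(T'). (Equivalently, tns(T,(V_ℓ),r·f) ⊆ tns(T',(V_ℓ),r^c·f') for all r ≥ r_0.) -/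

import Mathlib

open TensorProduct PiTensorProduct

namespace TNS

/-- A full binary rooted tree with leaves labelled by `L` (together with a choice of
left and right child at every node, i.e. a plane structure, which is irrelevant for
the combinatorics of descendant leaf sets). -/
inductive BTree (L : Type*) : Type _ where
  | leaf : L → BTree L
  | node : BTree L → BTree L → BTree L

namespace BTree

variable {L : Type*}

/-- The list of leaf labels, from left to right. -/
def leafList : BTree L → List L
  | .leaf l => [l]
  | .node lt rt => lt.leafList ++ rt.leafList

/-- The set of leaf labels. -/
def leafSet (t : BTree L) : Set L := {l | l ∈ t.leafList}

/-- The subtree at a position (a path of left (`false`) / right (`true`) steps from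
the root), if the position is a vertex of the tree. -/
def subtreeAt : BTree L → List Bool → Option (BTree L)
  | t, [] => some t
  | .leaf _, _ :: _ => none
  | .node lt _, false :: p => lt.subtreeAt p
  | .node _ rt, true :: p => rt.subtreeAt p

/-- `p` is a vertex of `t`; vertices are encoded by their 0/1-path from the root.
In the descendant order, `p` is a descendant of `q` iff `q` is a prefix of `p`
(`q <+: p`). -/
def IsVertex (t : BTree L) (p : List Bool) : Prop := (t.subtreeAt p).isSome

/-- `des t p`: the set of leaves descending from the vertex `p`. -/
def des (t : BTree L) (p : List Bool) : Set L :=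
  match t.subtreeAt p with
  | some s => s.leafSet
  | none => ∅

/-- `anti t p`: the complement of `des t p` in the leaf set. -/
def anti (t : BTree L) (p : List Bool) : Set L := t.leafSet \ t.des p

/-- A doad set: a set of leaves of the form `des v` or `anti v` for a vertex `v`. -/
def IsDoad (t : BTree L) (S : Set L) : Prop :=
  ∃ p, t.IsVertex p ∧ (S = t.des p ∨ S = t.anti p)

/-- `t` is a tree on the leaf set `L`: its leaves are pairwise distinct and exhaust `L`. -/
def IsTreeOn (t : BTree L) : Prop := t.leafList.Nodup ∧ ∀ l : L, l ∈ t.leafList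

/-- `S` is a union of at most `m` doad sets of `t`. -/
def IsUnionOfAtMostDoads (t : BTree L) (m : ℕ) (S : Set L) : Prop :=
  ∃ (k : ℕ) (F : Fin k → Set L), k ≤ m ∧ (∀ i, t.IsDoad (F i)) ∧ (⋃ i, F i) = S

end BTree

section FlatteningRank

lemma restrict_update_of_mem {I : Type*} {V : I → Type*} [DecidableEq I] {S : Set I}
    (v : ∀ i, V i) {i : I} (hi : i ∈ S) (x : V i) :
    (fun j : S => Function.update v i x j) =
      Function.update (fun j : S => v j) ⟨i, hi⟩ x := by
  funext j
  rcases eq_or_ne j ⟨i, hi⟩ with rfl | hj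
  · simp
  · have h1 : (j : I) ≠ i := fun h => hj (Subtype.ext h)
    simp [Function.update_of_ne h1, Function.update_of_ne hj]

lemma restrict_update_of_not_mem {I : Type*} {V : I → Type*} [DecidableEq I] {S : Set I}
    (v : ∀ i, V i) {i : I} (hi : i ∉ S) (x : V i) :
    (fun j : S => Function.update v i x j) = fun j : S => v j := by
  funext j
  have h1 : (j : I) ≠ i := fun h => hi (h ▸ j.2)
  simp [Function.update_of_ne h1]

variable (K : Type*) [Field K] {I : Type*} (V : I → Type*)
  [∀ i, AddCommGroup (V i)] [∀ i, Module K (V i)]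

/-- The multilinear map splitting a family of vectors into the part indexed by `S`
and the part indexed by the complement of `S`, as a two-fold tensor product. -/
noncomputable def splitML (S : Set I) :
    MultilinearMap K V ((⨂[K] i : S, V i) ⊗[K] (⨂[K] i : ↥(Sᶜ), V i)) where
  toFun v := (⨂ₜ[K] i : S, v i) ⊗ₜ[K] (⨂ₜ[K] i : ↥(Sᶜ), v i)
  map_update_add' := by
    intro dec v i x y
    by_cases hi : i ∈ S
    · have hc : i ∉ (Sᶜ : Set I) := by simp [hi]
      simp only [restrict_update_of_mem v hi, restrict_update_of_not_mem v hc,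
        MultilinearMap.map_update_add, TensorProduct.add_tmul]
    · have hc : i ∈ (Sᶜ : Set I) := hi
      simp only [restrict_update_of_mem v hc, restrict_update_of_not_mem v hi,
        MultilinearMap.map_update_add, TensorProduct.tmul_add]
  map_update_smul' := by
    intro dec v i c x
    by_cases hi : i ∈ S
    · have hc : i ∉ (Sᶜ : Set I) := by simp [hi]
      simp only [restrict_update_of_mem v hi, restrict_update_of_not_mem v hc,
        MultilinearMap.map_update_smul, TensorProduct.smul_tmul']
    · have hc : i ∈ (Sᶜ : Set I) := hi
      simp only [restrict_update_of_mem v hc, restrict_update_of_not_mem v hi,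
        MultilinearMap.map_update_smul, TensorProduct.tmul_smul]

/-- The canonical identification `⨂_{i ∈ I} V i → (⨂_{i ∈ S} V i) ⊗ (⨂_{i ∈ I∖S} V i)`. -/
noncomputable def splitMap (S : Set I) :
    (⨂[K] i, V i) →ₗ[K] ((⨂[K] i : S, V i) ⊗[K] (⨂[K] i : ↥(Sᶜ), V i)) :=
  PiTensorProduct.lift (splitML K V S)

/-- The contraction map `(⨂_{i ∈ S} V i)* → ⨂_{i ∈ I∖S} V i`, `g ↦ g ⌟ t`, of a tensor
`t ∈ ⨂_{i ∈ I} V i`, under the canonical identification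
`⨂_{i ∈ I} V i ≅ (⨂_{i ∈ S} V i) ⊗ (⨂_{i ∈ I∖S} V i)`; on decomposable tensors,
`g ⌟ (x ⊗ y) = g(x) • y`. -/
noncomputable def contractionMap (S : Set I) (t : ⨂[K] i, V i) :
    Module.Dual K (⨂[K] i : S, V i) →ₗ[K] (⨂[K] i : ↥(Sᶜ), V i) :=
  (TensorProduct.lid K (⨂[K] i : ↥(Sᶜ), V i)).toLinearMap ∘ₗ
    (LinearMap.applyₗ (splitMap K V S t)) ∘ₗ
    (LinearMap.rTensorHom (⨂[K] i : ↥(Sᶜ), V i))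

/-- The flattening rank `rk_S(t)`: the dimension of the image of the contraction map
`(⨂_{i ∈ S} V i)* → ⨂_{i ∈ I∖S} V i`, `g ↦ g ⌟ t`. -/
noncomputable def flatRank (S : Set I) (t : ⨂[K] i, V i) : ℕ :=
  Module.finrank K (LinearMap.range (contractionMap K V S t))

end FlatteningRank

/-! ### Auxiliary linear algebra -/

section AuxAlg

open Module

/-- Finite dimensionality of finite pi-tensor products. -/
instance piTensor_finite (K : Type*) [Field K] {ι : Type*} [Finite ι] (W : ι → Type*)
    [∀ i, AddCommGroup (W i)] [∀ i, Module K (W i)] [∀ i, FiniteDimensional K (W i)] :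
    Module.Finite K (⨂[K] i, W i) := by
  cases nonempty_fintype ι
  classical
  let d : ι → ℕ := fun i => Module.finrank K (W i)
  let b : ∀ i, Basis (Fin (d i)) K (W i) := fun i => Module.finBasis K (W i)
  constructor
  rw [Submodule.fg_def]
  refine ⟨Set.range (fun k : Π i, Fin (d i) => ⨂ₜ[K] i, b i (k i)), Set.finite_range _, ?_⟩
  rw [eq_top_iff, ← PiTensorProduct.span_tprod_eq_top, Submodule.span_le]
  rintro _ ⟨v, rfl⟩
  have hv : tprod K v
      = ∑ k : Π i, Fin (d i), (∏ i, (b i).repr (v i) (k i)) • ⨂ₜ[K] i, b i (k i) := by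
    conv_lhs => rw [show v = (fun i => ∑ j, (b i).repr (v i) j • b i j) from
      funext fun i => ((b i).sum_repr (v i)).symm]
    rw [MultilinearMap.map_sum]
    exact Finset.sum_congr rfl fun k _ => MultilinearMap.map_smul_univ _ _ _
  rw [hv]
  exact Submodule.sum_mem _ fun k _ =>
    Submodule.smul_mem _ _ (Submodule.subset_span ⟨k, rfl⟩)

theorem pull_update_of_mem' {I : Type*} {V : I → Type*} {S U : Set I}
    [DecidableEq ↥U] [DecidableEq ↥S]
    (hSU : S ⊆ U) (v : ∀ i : U, V i) (j : U) (hj : (j : I) ∈ S) (x : V j) :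
    (fun i : S => Function.update v j x ⟨i, hSU i.2⟩)
      = Function.update (fun i : S => v ⟨i, hSU i.2⟩) ⟨(j : I), hj⟩ x := by
  funext i
  rcases eq_or_ne ((i : I)) ((j : I)) with h | h
  · have h2 : i = (⟨(j : I), hj⟩ : S) := Subtype.ext h
    subst h2
    rw [Function.update_self, Function.update_self]
  · have h1 : (⟨(i : I), hSU i.2⟩ : U) ≠ j := fun hh => h (congrArg Subtype.val hh)
    have h2 : i ≠ (⟨(j : I), hj⟩ : S) := fun hh => h (congrArg Subtype.val hh)
    rw [Function.update_of_ne h1, Function.update_of_ne h2]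

theorem pull_update_of_not_mem' {I : Type*} {V : I → Type*} {S U : Set I}
    [DecidableEq ↥U]
    (hSU : S ⊆ U) (v : ∀ i : U, V i) (j : U) (hj : (j : I) ∉ S) (x : V j) :
    (fun i : S => Function.update v j x ⟨i, hSU i.2⟩) = fun i : S => v ⟨i, hSU i.2⟩ := by
  funext i
  refine Function.update_of_ne (fun hh => hj ?_) _ _
  rw [← congrArg Subtype.val hh]
  exact i.2

variable (K : Type*) [Field K] {I : Type*} (V : I → Type*)
  [∀ i, AddCommGroup (V i)] [∀ i, Module K (V i)]

/-- Restriction of coordinates along an equality of index sets, as a multilinear map. -/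
noncomputable def pullML (S U : Set I) (h1 : S ⊆ U) (h2 : U ⊆ S) :
    MultilinearMap K (fun i : U => V i) (⨂[K] i : S, V i) where
  toFun v := ⨂ₜ[K] i : S, v ⟨i, h1 i.2⟩
  map_update_add' := by
    intro dec v j x y
    classical
    simp only [pull_update_of_mem' h1 v j (h2 j.2), MultilinearMap.map_update_add]
  map_update_smul' := by
    intro dec v j c x
    classical
    simp only [pull_update_of_mem' h1 v j (h2 j.2), MultilinearMap.map_update_smul]

/-- Splitting the coordinates of a subtype pi-tensor product along a partition into two
subsets, as a multilinear map. -/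
noncomputable def split2ML (P Q U : Set I) (hP : P ⊆ U) (hQ : Q ⊆ U)
    (hPQ : ∀ i : I, i ∈ P → i ∈ Q → False) (hcov : ∀ i : I, i ∈ U → i ∈ P ∨ i ∈ Q) :
    MultilinearMap K (fun i : U => V i) ((⨂[K] i : P, V i) ⊗[K] (⨂[K] i : Q, V i)) where
  toFun v := (⨂ₜ[K] i : P, v ⟨i, hP i.2⟩) ⊗ₜ[K] (⨂ₜ[K] i : Q, v ⟨i, hQ i.2⟩)
  map_update_add' := by
    intro dec v j x y
    classical
    rcases hcov j j.2 with hj | hj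
    · have hj' : (j : I) ∉ Q := fun hq => hPQ _ hj hq
      simp only [pull_update_of_mem' hP v j hj, pull_update_of_not_mem' hQ v j hj',
        MultilinearMap.map_update_add, TensorProduct.add_tmul]
    · have hj' : (j : I) ∉ P := fun hq => hPQ _ hq hj
      simp only [pull_update_of_mem' hQ v j hj, pull_update_of_not_mem' hP v j hj',
        MultilinearMap.map_update_add, TensorProduct.tmul_add]
  map_update_smul' := by
    intro dec v j c x
    classical
    rcases hcov j j.2 with hj | hj
    · have hj' : (j : I) ∉ Q := fun hq => hPQ _ hj hq
      simp only [pull_update_of_mem' hP v j hj, pull_update_of_not_mem' hQ v j hj',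
        MultilinearMap.map_update_smul, TensorProduct.smul_tmul']
    · have hj' : (j : I) ∉ P := fun hq => hPQ _ hq hj
      simp only [pull_update_of_mem' hQ v j hj, pull_update_of_not_mem' hP v j hj',
        MultilinearMap.map_update_smul, TensorProduct.tmul_smul]

/-- The splitting linear map. -/
noncomputable def split2 (P Q U : Set I) (hP : P ⊆ U) (hQ : Q ⊆ U)
    (hPQ : ∀ i : I, i ∈ P → i ∈ Q → False) (hcov : ∀ i : I, i ∈ U → i ∈ P ∨ i ∈ Q) :
    (⨂[K] i : U, V i) →ₗ[K] ((⨂[K] i : P, V i) ⊗[K] (⨂[K] i : Q, V i)) :=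
  PiTensorProduct.lift (split2ML K V P Q U hP hQ hPQ hcov)

@[simp] theorem split2_tprod (P Q U : Set I) (hP : P ⊆ U) (hQ : Q ⊆ U)
    (hPQ : ∀ i : I, i ∈ P → i ∈ Q → False) (hcov : ∀ i : I, i ∈ U → i ∈ P ∨ i ∈ Q)
    (v : ∀ i : U, V i) :
    split2 K V P Q U hP hQ hPQ hcov (⨂ₜ[K] i : U, v i)
      = (⨂ₜ[K] i : P, v ⟨i, hP i.2⟩) ⊗ₜ[K] (⨂ₜ[K] i : Q, v ⟨i, hQ i.2⟩) := by
  rw [split2, PiTensorProduct.lift.tprod]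
  rfl

open Classical in
/-- Combining two families of vectors indexed by the parts of a partition. -/
noncomputable def combineFun (P Q U : Set I) (hcov : ∀ i : I, i ∈ U → i ∈ P ∨ i ∈ Q)
    (v : ∀ i : P, V i) (w : ∀ i : Q, V i) : ∀ i : U, V i :=
  fun i => if h : (i : I) ∈ P then v ⟨i, h⟩ else w ⟨i, ((hcov i i.2).resolve_left h)⟩

theorem combineFun_update_left (P Q U : Set I) (hcov : ∀ i : I, i ∈ U → i ∈ P ∨ i ∈ Q)
    (hPU : P ⊆ U) (hPQ : ∀ i : I, i ∈ P → i ∈ Q → False)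
    [DecidableEq ↥P] [DecidableEq ↥U]
    (v : ∀ i : P, V i) (w : ∀ i : Q, V i) (a : ↥P) (x : V a) :
    combineFun V P Q U hcov (Function.update v a x) w
      = Function.update (combineFun V P Q U hcov v w) ⟨(a : I), hPU a.2⟩ x := by
  classical
  funext i
  rcases eq_or_ne i (⟨(a : I), hPU a.2⟩ : U) with rfl | hne
  · rw [Function.update_self]
    show dite _ _ _ = x
    rw [dif_pos a.2]
    exact Function.update_self _ _ _
  · rw [Function.update_of_ne hne]
    show dite _ _ _ = dite _ _ _
    by_cases hi : (i : I) ∈ P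
    · rw [dif_pos hi, dif_pos hi]
      refine Function.update_of_ne (fun hh => hne ?_) _ _
      exact Subtype.ext (show (i : I) = (a : I) from congrArg Subtype.val hh)
    · rw [dif_neg hi, dif_neg hi]

theorem combineFun_update_right (P Q U : Set I) (hcov : ∀ i : I, i ∈ U → i ∈ P ∨ i ∈ Q)
    (hQU : Q ⊆ U) (hPQ : ∀ i : I, i ∈ P → i ∈ Q → False)
    [DecidableEq ↥Q] [DecidableEq ↥U]
    (v : ∀ i : P, V i) (w : ∀ i : Q, V i) (a : ↥Q) (x : V a) :
    combineFun V P Q U hcov v (Function.update w a x)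
      = Function.update (combineFun V P Q U hcov v w) ⟨(a : I), hQU a.2⟩ x := by
  classical
  funext i
  have haP : (a : I) ∉ P := fun h => hPQ _ h a.2
  rcases eq_or_ne i (⟨(a : I), hQU a.2⟩ : U) with rfl | hne
  · rw [Function.update_self]
    show dite _ _ _ = x
    rw [dif_neg haP]
    exact Function.update_self _ _ _
  · rw [Function.update_of_ne hne]
    show dite _ _ _ = dite _ _ _
    by_cases hi : (i : I) ∈ P
    · rw [dif_pos hi, dif_pos hi]
    · rw [dif_neg hi, dif_neg hi]
      refine Function.update_of_ne (fun hh => hne ?_) _ _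
      exact Subtype.ext (show (i : I) = (a : I) from congrArg Subtype.val hh)

theorem combineFun_pull (P Q U : Set I) (hcov : ∀ i : I, i ∈ U → i ∈ P ∨ i ∈ Q)
    (hPU : P ⊆ U) (hQU : Q ⊆ U) (v : ∀ i : U, V i) :
    combineFun V P Q U hcov (fun i : P => v ⟨i, hPU i.2⟩) (fun i : Q => v ⟨i, hQU i.2⟩)
      = v := by
  classical
  funext i
  show dite _ _ _ = v i
  split <;> rfl

/-- Inner multilinear merging map. -/
noncomputable def mergeInner (P Q U : Set I) (hPU : P ⊆ U) (hQU : Q ⊆ U)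
    (hPQ : ∀ i : I, i ∈ P → i ∈ Q → False) (hcov : ∀ i : I, i ∈ U → i ∈ P ∨ i ∈ Q)
    (v : ∀ i : P, V i) :
    MultilinearMap K (fun i : Q => V i) (⨂[K] i : U, V i) where
  toFun w := tprod K (combineFun V P Q U hcov v w)
  map_update_add' := by
    intro dec w j x y
    classical
    simp only [combineFun_update_right V P Q U hcov hQU hPQ,
      MultilinearMap.map_update_add]
  map_update_smul' := by
    intro dec w j c x
    classical
    simp only [combineFun_update_right V P Q U hcov hQU hPQ,
      MultilinearMap.map_update_smul]

/-- Outer multilinear merging map. -/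
noncomputable def mergeML (P Q U : Set I) (hPU : P ⊆ U) (hQU : Q ⊆ U)
    (hPQ : ∀ i : I, i ∈ P → i ∈ Q → False) (hcov : ∀ i : I, i ∈ U → i ∈ P ∨ i ∈ Q) :
    MultilinearMap K (fun i : P => V i) ((⨂[K] i : Q, V i) →ₗ[K] ⨂[K] i : U, V i) where
  toFun v := PiTensorProduct.lift (mergeInner K V P Q U hPU hQU hPQ hcov v)
  map_update_add' := by
    intro dec v j x y
    classical
    refine PiTensorProduct.ext (MultilinearMap.ext fun w => ?_)
    simp only [LinearMap.compMultilinearMap_apply, PiTensorProduct.lift.tprod,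
      LinearMap.add_apply, mergeInner, MultilinearMap.coe_mk,
      combineFun_update_left V P Q U hcov hPU hPQ, MultilinearMap.map_update_add]
  map_update_smul' := by
    intro dec v j c x
    classical
    refine PiTensorProduct.ext (MultilinearMap.ext fun w => ?_)
    simp only [LinearMap.compMultilinearMap_apply, PiTensorProduct.lift.tprod,
      LinearMap.smul_apply, mergeInner, MultilinearMap.coe_mk,
      combineFun_update_left V P Q U hcov hPU hPQ, MultilinearMap.map_update_smul]

/-- The merging linear map, inverse to `split2`. -/
noncomputable def merge (P Q U : Set I) (hPU : P ⊆ U) (hQU : Q ⊆ U)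
    (hPQ : ∀ i : I, i ∈ P → i ∈ Q → False) (hcov : ∀ i : I, i ∈ U → i ∈ P ∨ i ∈ Q) :
    ((⨂[K] i : P, V i) ⊗[K] (⨂[K] i : Q, V i)) →ₗ[K] (⨂[K] i : U, V i) :=
  TensorProduct.lift (PiTensorProduct.lift (mergeML K V P Q U hPU hQU hPQ hcov))

theorem merge_split2 (P Q U : Set I) (hPU : P ⊆ U) (hQU : Q ⊆ U)
    (hPQ : ∀ i : I, i ∈ P → i ∈ Q → False) (hcov : ∀ i : I, i ∈ U → i ∈ P ∨ i ∈ Q)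
    (x : ⨂[K] i : U, V i) :
    merge K V P Q U hPU hQU hPQ hcov (split2 K V P Q U hPU hQU hPQ hcov x) = x := by
  induction x using PiTensorProduct.induction_on with
  | smul_tprod r v =>
    rw [map_smul, map_smul, split2_tprod]
    rw [merge, TensorProduct.lift.tmul, PiTensorProduct.lift.tprod]
    show r • PiTensorProduct.lift (mergeInner K V P Q U hPU hQU hPQ hcov _)
        ((PiTensorProduct.tprod K) _) = _
    rw [PiTensorProduct.lift.tprod]
    show r • (PiTensorProduct.tprod K) (combineFun V P Q U hcov _ _) = _
    rw [combineFun_pull]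
  | add x y hx hy =>
    rw [map_add, map_add, hx, hy]

/-- Partial contraction: contract the `P`-part of a tensor indexed by `U` against a
functional, leaving a tensor indexed by `Q`. -/
noncomputable def pcontr (P Q U : Set I) (hP : P ⊆ U) (hQ : Q ⊆ U)
    (hPQ : ∀ i : I, i ∈ P → i ∈ Q → False) (hcov : ∀ i : I, i ∈ U → i ∈ P ∨ i ∈ Q) :
    Module.Dual K (⨂[K] i : P, V i) →ₗ[K]
      ((⨂[K] i : U, V i) →ₗ[K] ⨂[K] i : Q, V i) where
  toFun g := (TensorProduct.lid K _).toLinearMap ∘ₗ (LinearMap.rTensor _ g) ∘ₗ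
      split2 K V P Q U hP hQ hPQ hcov
  map_add' g₁ g₂ := by
    refine LinearMap.ext fun x => ?_
    simp [LinearMap.rTensor_add]
  map_smul' c g := by
    refine LinearMap.ext fun x => ?_
    simp [LinearMap.rTensor_smul]

@[simp] theorem pcontr_tprod (P Q U : Set I) (hP : P ⊆ U) (hQ : Q ⊆ U)
    (hPQ : ∀ i : I, i ∈ P → i ∈ Q → False) (hcov : ∀ i : I, i ∈ U → i ∈ P ∨ i ∈ Q)
    (g : Module.Dual K (⨂[K] i : P, V i)) (v : ∀ i : U, V i) :
    pcontr K V P Q U hP hQ hPQ hcov g (⨂ₜ[K] i : U, v i)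
      = g (⨂ₜ[K] i : P, v ⟨i, hP i.2⟩) • (⨂ₜ[K] i : Q, v ⟨i, hQ i.2⟩) := by
  show (TensorProduct.lid K _).toLinearMap ((LinearMap.rTensor _ g)
      (split2 K V P Q U hP hQ hPQ hcov (⨂ₜ[K] i : U, v i))) = _
  rw [split2_tprod, LinearMap.rTensor_tmul]
  simp

end AuxAlg

section AuxAlg2

variable (K : Type*) [Field K] {I : Type*} (V : I → Type*)
  [∀ i, AddCommGroup (V i)] [∀ i, Module K (V i)]

theorem contractionMap_apply (S : Set I) (t : ⨂[K] i, V i)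
    (g : Module.Dual K (⨂[K] i : S, V i)) :
    contractionMap K V S t g
      = (TensorProduct.lid K _).toLinearMap
          ((LinearMap.rTensor (⨂[K] i : ↥(Sᶜ), V i) g) (splitMap K V S t)) := rfl

theorem contractionMap_tprod (S : Set I) (v : ∀ i, V i)
    (g : Module.Dual K (⨂[K] i : S, V i)) :
    contractionMap K V S (tprod K v) g
      = g (⨂ₜ[K] i : S, v i) • ⨂ₜ[K] i : ↥(Sᶜ), v i := by
  rw [contractionMap_apply, splitMap, PiTensorProduct.lift.tprod]
  show (TensorProduct.lid K _).toLinearMap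
      ((LinearMap.rTensor _ g) ((⨂ₜ[K] i : S, v i) ⊗ₜ[K] (⨂ₜ[K] i : ↥(Sᶜ), v i))) = _
  rw [LinearMap.rTensor_tmul]
  simp

theorem contractionMap_add (S : Set I) (t t' : ⨂[K] i, V i) :
    contractionMap K V S (t + t') = contractionMap K V S t + contractionMap K V S t' := by
  refine LinearMap.ext fun g => ?_
  simp [contractionMap_apply, map_add]

theorem contractionMap_smul (S : Set I) (c : K) (t : ⨂[K] i, V i) :
    contractionMap K V S (c • t) = c • contractionMap K V S t := by
  refine LinearMap.ext fun g => ?_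
  simp [contractionMap_apply, map_smul]

variable {A B : Set I}

theorem subset_compl_left (hd : ∀ i : I, i ∈ A → i ∈ B → False) : B ⊆ Aᶜ := by
  intro i hi
  simp only [Set.mem_compl_iff]
  exact fun hA => hd i hA hi

theorem union_compl_subset_compl_left : (A ∪ B)ᶜ ⊆ Aᶜ := by
  intro i hi
  simp only [Set.mem_compl_iff] at hi ⊢
  exact fun hA => hi (Or.inl hA)

theorem union_compl_disj_right : ∀ i : I, i ∈ B → i ∈ (A ∪ B)ᶜ → False := by
  intro i hB hc
  exact hc (Or.inr hB)

theorem compl_left_cov : ∀ i : I, i ∈ Aᶜ → i ∈ B ∨ i ∈ (A ∪ B)ᶜ := by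
  intro i hi
  by_cases hB : i ∈ B
  · exact Or.inl hB
  · exact Or.inr (fun hab => hab.elim hi hB)

/-- The product functional `g ⊗ h` on `⨂_{A∪B}`. -/
noncomputable def phiFun (hd : ∀ i : I, i ∈ A → i ∈ B → False)
    (g : Module.Dual K (⨂[K] i : A, V i)) (h : Module.Dual K (⨂[K] i : B, V i)) :
    Module.Dual K (⨂[K] i : ↥(A ∪ B), V i) :=
  h ∘ₗ pcontr K V A B (A ∪ B) Set.subset_union_left Set.subset_union_right hd
    (fun _ hi => (Set.mem_union _ _ _).mp hi) g

/-- Partial contraction along `B` inside `Aᶜ`. -/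
noncomputable def piB (hd : ∀ i : I, i ∈ A → i ∈ B → False) :
    Module.Dual K (⨂[K] i : B, V i) →ₗ[K]
      ((⨂[K] i : ↥(Aᶜ), V i) →ₗ[K] ⨂[K] i : ↥((A ∪ B)ᶜ), V i) :=
  pcontr K V B ((A ∪ B)ᶜ) (Aᶜ) (subset_compl_left hd) union_compl_subset_compl_left
    union_compl_disj_right compl_left_cov

theorem union_compl_subset_compl_right : (A ∪ B)ᶜ ⊆ Bᶜ := by
  intro i hi
  simp only [Set.mem_compl_iff] at hi ⊢
  exact fun hB => hi (Or.inr hB)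

theorem subset_compl_right (hd : ∀ i : I, i ∈ A → i ∈ B → False) : A ⊆ Bᶜ := by
  intro i hi
  simp only [Set.mem_compl_iff]
  exact fun hB => hd i hi hB

theorem union_compl_disj_left : ∀ i : I, i ∈ A → i ∈ (A ∪ B)ᶜ → False := by
  intro i hA hc
  exact hc (Or.inl hA)

theorem compl_right_cov : ∀ i : I, i ∈ Bᶜ → i ∈ A ∨ i ∈ (A ∪ B)ᶜ := by
  intro i hi
  by_cases hA : i ∈ A
  · exact Or.inl hA
  · exact Or.inr (fun hab => hab.elim hA hi)

/-- Partial contraction along `A` inside `Bᶜ`. -/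
noncomputable def piA (hd : ∀ i : I, i ∈ A → i ∈ B → False) :
    Module.Dual K (⨂[K] i : A, V i) →ₗ[K]
      ((⨂[K] i : ↥(Bᶜ), V i) →ₗ[K] ⨂[K] i : ↥((A ∪ B)ᶜ), V i) :=
  pcontr K V A ((A ∪ B)ᶜ) (Bᶜ) (subset_compl_right hd) union_compl_subset_compl_right
    union_compl_disj_left compl_right_cov

theorem contraction_phi_left (hd : ∀ i : I, i ∈ A → i ∈ B → False)
    (t : ⨂[K] i, V i) (g : Module.Dual K (⨂[K] i : A, V i))
    (h : Module.Dual K (⨂[K] i : B, V i)) :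
    contractionMap K V (A ∪ B) t (phiFun K V hd g h)
      = piB K V hd h (contractionMap K V A t g) := by
  induction t using PiTensorProduct.induction_on with
  | smul_tprod r v =>
    simp only [contractionMap_smul, LinearMap.smul_apply, map_smul, contractionMap_tprod,
      phiFun, piB, LinearMap.comp_apply, pcontr_tprod, map_smul, smul_smul, smul_eq_mul]
    ring_nf
  | add x y ihx ihy =>
    simp only [contractionMap_add, LinearMap.add_apply, map_add, ihx, ihy]

theorem contraction_phi_right (hd : ∀ i : I, i ∈ A → i ∈ B → False)
    (t : ⨂[K] i, V i) (g : Module.Dual K (⨂[K] i : A, V i))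
    (h : Module.Dual K (⨂[K] i : B, V i)) :
    contractionMap K V (A ∪ B) t (phiFun K V hd g h)
      = piA K V hd g (contractionMap K V B t h) := by
  induction t using PiTensorProduct.induction_on with
  | smul_tprod r v =>
    simp only [contractionMap_smul, LinearMap.smul_apply, map_smul, contractionMap_tprod,
      phiFun, piA, LinearMap.comp_apply, pcontr_tprod, map_smul, smul_smul, smul_eq_mul]
    ring_nf
  | add x y ihx ihy =>
    simp only [contractionMap_add, LinearMap.add_apply, map_add, ihx, ihy]

set_option maxHeartbeats 1000000 in
set_option synthInstance.maxHeartbeats 400000 in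
theorem phi_span [Finite I] [∀ i, FiniteDimensional K (V i)]
    (hd : ∀ i : I, i ∈ A → i ∈ B → False) (G : Module.Dual K (⨂[K] i : ↥(A ∪ B), V i)) :
    G ∈ Submodule.span K
      {φ : Module.Dual K (⨂[K] i : ↥(A ∪ B), V i) | ∃ g h, φ = phiFun K V hd g h} := by
  classical
  have hcov : ∀ i : I, i ∈ (A ∪ B : Set I) → i ∈ A ∨ i ∈ B := fun _ hi => hi
  have hGm : G = (G ∘ₗ merge K V A B (A ∪ B) Set.subset_union_left Set.subset_union_right
      hd hcov) ∘ₗ split2 K V A B (A ∪ B) Set.subset_union_left Set.subset_union_right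
      hd hcov := by
    refine LinearMap.ext fun x => ?_
    simp [merge_split2]
  obtain ⟨z, hz⟩ : ∃ z, (TensorProduct.dualDistribEquiv K (⨂[K] i : A, V i)
        (⨂[K] i : B, V i)) z
      = G ∘ₗ merge K V A B (A ∪ B) Set.subset_union_left Set.subset_union_right hd hcov :=
    ⟨_, (TensorProduct.dualDistribEquiv K _ _).apply_symm_apply _⟩
  rw [hGm, ← hz]
  clear hz hGm
  set E := (TensorProduct.dualDistribEquiv K (⨂[K] i : A, V i)
    (⨂[K] i : B, V i)).toLinearMap with hE
  simp only [show ∀ w, (TensorProduct.dualDistribEquiv K (⨂[K] i : A, V i)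
    (⨂[K] i : B, V i)) w = E w from fun _ => rfl]
  clear hE
  have hzmem : z ∈ (⊤ : Submodule K _) := trivial
  rw [← TensorProduct.span_tmul_eq_top] at hzmem
  induction hzmem using Submodule.span_induction with
  | mem w hw =>
    obtain ⟨g, h, rfl⟩ := hw
    refine Submodule.subset_span ⟨g, h, ?_⟩
    refine PiTensorProduct.ext (MultilinearMap.ext fun v => ?_)
    simp only [LinearMap.compMultilinearMap_apply, LinearMap.comp_apply, split2_tprod, E,
      LinearEquiv.coe_coe, TensorProduct.dualDistribEquiv,
      TensorProduct.dualDistribEquivOfBasis, LinearEquiv.ofLinear_apply,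
      TensorProduct.dualDistrib_apply, phiFun, pcontr_tprod, map_smul, smul_eq_mul]
  | zero =>
    rw [map_zero, LinearMap.zero_comp]
    exact Submodule.zero_mem _
  | add x y _ _ ihx ihy =>
    rw [map_add, LinearMap.add_comp]
    exact Submodule.add_mem _ ihx ihy
  | smul c x _ ih =>
    rw [map_smul, LinearMap.smul_comp]
    exact Submodule.smul_mem _ _ ih

theorem finrank_iSup_fin_le {E' : Type*} [AddCommGroup E'] [Module K E']
    [FiniteDimensional K E'] :
    ∀ (n : ℕ) (N : Fin n → Submodule K E'),
      Module.finrank K ↥(⨆ i, N i) ≤ ∑ i, Module.finrank K ↥(N i) := by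
  intro n
  induction n with
  | zero =>
    intro N
    rw [iSup_of_empty]
    simp
  | succ n ih =>
    intro N
    have hsup : (⨆ i, N i) = N 0 ⊔ ⨆ i : Fin n, N i.succ := by
      apply le_antisymm
      · exact iSup_le fun i => Fin.cases le_sup_left
          (fun j => le_sup_of_le_right (le_iSup (fun k : Fin n => N k.succ) j)) i
      · exact sup_le (le_iSup N 0) (iSup_le fun j => le_iSup N j.succ)
    rw [hsup, Fin.sum_univ_succ]
    exact (Submodule.finrank_add_le_finrank_add_finrank _ _).trans
      (Nat.add_le_add le_rfl (ih _))

set_option maxHeartbeats 1000000 in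
set_option synthInstance.maxHeartbeats 400000 in
theorem flatRank_union_le [Finite I] [∀ i, FiniteDimensional K (V i)]
    (A B : Set I) (hd : ∀ i : I, i ∈ A → i ∈ B → False) (t : ⨂[K] i, V i) :
    flatRank K V (A ∪ B) t ≤ flatRank K V A t * flatRank K V B t := by
  classical
  set m := flatRank K V A t with hm
  let bW : Module.Basis (Fin m) K ↥(LinearMap.range (contractionMap K V A t)) :=
    Module.finBasisOfFinrankEq K _ (by rw [hm]; rfl)
  choose gs hgs using fun i : Fin m => LinearMap.mem_range.mp (bW i).2
  let N : Fin m → Submodule K (⨂[K] i : ↥((A ∪ B)ᶜ), V i) :=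
    fun i => Submodule.map (piA K V hd (gs i)) (LinearMap.range (contractionMap K V B t))
  have hle : LinearMap.range (contractionMap K V (A ∪ B) t) ≤ ⨆ i, N i := by
    rintro x ⟨G, rfl⟩
    have hG := phi_span K V hd G
    induction hG using Submodule.span_induction with
    | mem φ hφ =>
      obtain ⟨g, h, rfl⟩ := hφ
      rw [contraction_phi_left K V hd t g h]
      have hmem : contractionMap K V A t g ∈ LinearMap.range (contractionMap K V A t) :=
        ⟨g, rfl⟩
      have hfold : piB K V hd h (contractionMap K V A t g)
          = (piB K V hd h ∘ₗ (LinearMap.range (contractionMap K V A t)).subtype)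
              ⟨contractionMap K V A t g, hmem⟩ := rfl
      rw [hfold, ← bW.sum_repr ⟨contractionMap K V A t g, hmem⟩, map_sum]
      refine Submodule.sum_mem _ fun i _ => ?_
      rw [map_smul]
      refine Submodule.smul_mem _ _ ?_
      have hbi : (piB K V hd h ∘ₗ (LinearMap.range (contractionMap K V A t)).subtype) (bW i)
          = piB K V hd h (contractionMap K V A t (gs i)) := by
        rw [LinearMap.comp_apply, Submodule.subtype_apply, hgs i]
      rw [hbi, ← contraction_phi_left K V hd t (gs i) h,
        contraction_phi_right K V hd t (gs i) h]
      exact (le_iSup N i) ⟨contractionMap K V B t h, ⟨h, rfl⟩, rfl⟩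
    | zero =>
      rw [map_zero]
      exact Submodule.zero_mem _
    | add x y _ _ ihx ihy =>
      rw [map_add]
      exact Submodule.add_mem _ ihx ihy
    | smul c x _ ih =>
      rw [map_smul]
      exact Submodule.smul_mem _ _ ih
  calc flatRank K V (A ∪ B) t
      ≤ Module.finrank K ↥(⨆ i, N i) := Submodule.finrank_mono hle
    _ ≤ ∑ _i : Fin m, Module.finrank K ↥(N _i) := finrank_iSup_fin_le K m N
    _ ≤ ∑ _i : Fin m, flatRank K V B t := Finset.sum_le_sum fun i _ =>
        Submodule.finrank_map_le (piA K V hd (gs i))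
          (LinearMap.range (contractionMap K V B t))
    _ = m * flatRank K V B t := by
        rw [Finset.sum_const, Finset.card_univ, Fintype.card_fin, smul_eq_mul]

theorem flatRank_compl_le [Finite I] [∀ i, FiniteDimensional K (V i)]
    (S : Set I) (t : ⨂[K] i, V i) :
    flatRank K V (Sᶜ) t ≤ flatRank K V S t := by
  classical
  have h1 : (Sᶜᶜ : Set I) ⊆ S := (compl_compl S).le
  have h2 : S ⊆ (Sᶜᶜ : Set I) := (compl_compl S).ge
  let ρ : Module.Dual K (Module.Dual K (⨂[K] i : S, V i)) →ₗ[K] ⨂[K] i : ↥(Sᶜᶜ), V i :=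
    (PiTensorProduct.lift (pullML K V (Sᶜᶜ) S h1 h2)) ∘ₗ
      (Module.evalEquiv K (⨂[K] i : S, V i)).symm.toLinearMap
  have key : ∀ (t : ⨂[K] i, V i) (h : Module.Dual K (⨂[K] i : ↥(Sᶜ), V i)),
      contractionMap K V (Sᶜ) t h = ρ ((contractionMap K V S t).dualMap h) := by
    intro t
    induction t using PiTensorProduct.induction_on with
    | smul_tprod r v =>
      intro h
      have hd : (contractionMap K V S (r • tprod K v)).dualMap h
          = h ∘ₗ (r • contractionMap K V S (tprod K v)) := by
        rw [contractionMap_smul]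
        rfl
      rw [contractionMap_smul, LinearMap.smul_apply, contractionMap_tprod, hd]
      have hcomp : h ∘ₗ (r • contractionMap K V S (tprod K v))
          = (r * h (⨂ₜ[K] i : ↥(Sᶜ), v i)) •
              Module.evalEquiv K (⨂[K] i : S, V i) (⨂ₜ[K] i : S, v i) := by
        refine LinearMap.ext fun g => ?_
        simp only [LinearMap.comp_apply, LinearMap.smul_apply, contractionMap_tprod,
          map_smul, Module.evalEquiv_apply, Module.Dual.eval_apply, smul_eq_mul]
        ring
      rw [hcomp, map_smul]
      have hρ : ρ (Module.evalEquiv K (⨂[K] i : S, V i) (⨂ₜ[K] i : S, v i))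
          = ⨂ₜ[K] i : ↥(Sᶜᶜ), v i := by
        show (PiTensorProduct.lift (pullML K V (Sᶜᶜ) S h1 h2))
            ((Module.evalEquiv K (⨂[K] i : S, V i)).symm
              (Module.evalEquiv K (⨂[K] i : S, V i) (⨂ₜ[K] i : S, v i))) = _
        rw [LinearEquiv.symm_apply_apply, PiTensorProduct.lift.tprod]
        rfl
      rw [hρ, smul_smul]
    | add x y ihx ihy =>
      intro h
      have hd : (contractionMap K V S (x + y)).dualMap h
          = (contractionMap K V S x).dualMap h + (contractionMap K V S y).dualMap h := by
        simp only [LinearMap.dualMap_apply', contractionMap_add, LinearMap.comp_add]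
      rw [contractionMap_add, LinearMap.add_apply, ihx h, ihy h, hd, map_add]
  have keyt : contractionMap K V (Sᶜ) t = ρ ∘ₗ (contractionMap K V S t).dualMap :=
    LinearMap.ext fun h => key t h
  have h3 : flatRank K V (Sᶜ) t
      = Module.finrank K ↥(LinearMap.range (ρ ∘ₗ (contractionMap K V S t).dualMap)) := by
    rw [flatRank, keyt]
  rw [h3, LinearMap.range_comp]
  refine (Submodule.finrank_map_le _ _).trans ?_
  rw [LinearMap.finrank_range_dualMap_eq_finrank_range]
  exact le_rfl

theorem flatRank_empty_le [Finite I] [∀ i, FiniteDimensional K (V i)]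
    (t : ⨂[K] i, V i) :
    flatRank K V (∅ : Set I) t ≤ 1 := by
  have hle := LinearMap.finrank_range_le (contractionMap K V (∅ : Set I) t)
  have h0 : Module.finrank K (Module.Dual K (⨂[K] i : (∅ : Set I), V i)) = 1 := by
    rw [Subspace.dual_finrank_eq]
    rw [LinearEquiv.finrank_eq (PiTensorProduct.isEmptyEquiv (↥(∅ : Set I)))]
    exact Module.finrank_self K
  exact le_trans hle (le_of_eq h0)

end AuxAlg2

/-! ### Tree combinatorics -/

namespace BTree

variable {L : Type*}

theorem subtreeAt_append (t : BTree L) (p q : List Bool) :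
    t.subtreeAt (p ++ q) = (t.subtreeAt p).bind (fun s => s.subtreeAt q) := by
  induction p generalizing t with
  | nil => cases t <;> rfl
  | cons a p ih =>
    cases t with
    | leaf l => cases a <;> rfl
    | node lt rt => cases a <;> simp [subtreeAt, ih]

theorem leafList_subset_of_subtreeAt {t s : BTree L} {p : List Bool}
    (h : t.subtreeAt p = some s) : ∀ l, l ∈ s.leafList → l ∈ t.leafList := by
  induction p generalizing t with
  | nil =>
    obtain rfl : t = s := by simpa [subtreeAt] using h
    exact fun l hl => hl
  | cons a p ih =>
    cases t with
    | leaf l => simp [subtreeAt] at h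
    | node lt rt =>
      cases a
      · intro l hl
        have := ih (t := lt) h l hl
        simp only [leafList, List.mem_append]
        exact Or.inl this
      · intro l hl
        have := ih (t := rt) h l hl
        simp only [leafList, List.mem_append]
        exact Or.inr this

theorem des_nil (t : BTree L) : t.des [] = t.leafSet := by cases t <;> rfl

theorem root_isVertex (t : BTree L) : t.IsVertex [] := by
  cases t <;> rfl

theorem des_subset_leafSet (t : BTree L) (p : List Bool) : t.des p ⊆ t.leafSet := by
  intro l hl
  rcases h : t.subtreeAt p with _ | s
  · simp only [des, h] at hl
    exact absurd hl (Set.notMem_empty l)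
  · simp only [des, h] at hl
    exact leafList_subset_of_subtreeAt h l hl

theorem des_append (t s : BTree L) (p q : List Bool) (h : t.subtreeAt p = some s) :
    t.des (p ++ q) = s.des q := by
  simp only [des, subtreeAt_append, h, Option.bind]

theorem des_prefix_subset (t : BTree L) (p q : List Bool) (hpq : p <+: q) :
    t.des q ⊆ t.des p := by
  obtain ⟨r, rfl⟩ := hpq
  rcases h : t.subtreeAt p with _ | s
  · intro l hl
    simp only [des, subtreeAt_append, h, Option.bind] at hl
    exact absurd hl (Set.notMem_empty l)
  · rw [des_append t s p r h]
    have hdes : t.des p = s.leafSet := by simp [des, h]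
    rw [hdes]
    exact des_subset_leafSet s r

theorem isVertex_of_prefix {t : BTree L} {p q : List Bool} (h : t.IsVertex q)
    (hpq : p <+: q) : t.IsVertex p := by
  obtain ⟨r, rfl⟩ := hpq
  unfold IsVertex at h ⊢
  rw [subtreeAt_append] at h
  rcases hs : t.subtreeAt p with _ | s
  · rw [hs] at h
    simp at h
  · simp

theorem des_disjoint_aux :
    ∀ t : BTree L, t.leafList.Nodup → ∀ p q : List Bool, t.IsVertex p → t.IsVertex q →
      ¬ p <+: q → ¬ q <+: p → t.des p ∩ t.des q = ∅ := by
  intro t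
  induction t with
  | leaf l =>
    intro _ p q hp hq hpq hqp
    cases p with
    | nil => exact absurd List.nil_prefix hpq
    | cons a p => exact absurd hp (by simp [IsVertex, subtreeAt])
  | node lt rt ihl ihr =>
    intro hnd p q hp hq hpq hqp
    rw [leafList, List.nodup_append] at hnd
    obtain ⟨hnl, hnr, hdisj⟩ := hnd
    cases p with
    | nil => exact absurd List.nil_prefix hpq
    | cons a p =>
      cases q with
      | nil => exact absurd List.nil_prefix hqp
      | cons b q =>
        have hlr : ∀ (p' q' : List Bool), lt.des p' ∩ rt.des q' = ∅ := by
          intro p' q'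
          rw [Set.eq_empty_iff_forall_notMem]
          rintro x ⟨hx1, hx2⟩
          exact hdisj x (des_subset_leafSet lt p' hx1) x (des_subset_leafSet rt q' hx2) rfl
        cases a <;> cases b
        · exact ihl hnl p q hp hq
            (fun hc => hpq (List.cons_prefix_cons.mpr ⟨rfl, hc⟩))
            (fun hc => hqp (List.cons_prefix_cons.mpr ⟨rfl, hc⟩))
        · exact hlr p q
        · rw [Set.inter_comm]
          exact hlr q p
        · exact ihr hnr p q hp hq
            (fun hc => hpq (List.cons_prefix_cons.mpr ⟨rfl, hc⟩))
            (fun hc => hqp (List.cons_prefix_cons.mpr ⟨rfl, hc⟩))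

theorem des_rel (t : BTree L) (hnd : t.leafList.Nodup) (p q : List Bool)
    (hp : t.IsVertex p) (hq : t.IsVertex q) :
    t.des p ∩ t.des q = ∅ ∨ t.des p ⊆ t.des q ∨ t.des q ⊆ t.des p := by
  by_cases h1 : p <+: q
  · exact Or.inr (Or.inr (des_prefix_subset t p q h1))
  by_cases h2 : q <+: p
  · exact Or.inr (Or.inl (des_prefix_subset t q p h2))
  · exact Or.inl (des_disjoint_aux t hnd p q hp hq h1 h2)

theorem doad_union_des_anti (t : BTree L) (hnd : t.leafList.Nodup) (p q : List Bool)
    (hp : t.IsVertex p) (hq : t.IsVertex q) :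
    t.des p ∩ t.anti q = ∅ ∨ t.IsDoad (t.des p ∪ t.anti q) := by
  rcases des_rel t hnd p q hp hq with h | h | h
  · -- disjoint des sets: des p ⊆ anti q, union = anti q
    right
    refine ⟨q, hq, Or.inr ?_⟩
    apply Set.union_eq_self_of_subset_left
    intro x hx
    exact ⟨des_subset_leafSet t p hx,
      fun hxq => Set.eq_empty_iff_forall_notMem.mp h x ⟨hx, hxq⟩⟩
  · -- des p ⊆ des q: disjoint from anti q
    left
    rw [Set.eq_empty_iff_forall_notMem]
    rintro x ⟨hx1, hx2⟩
    exact hx2.2 (h hx1)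
  · -- des q ⊆ des p: union = leafSet
    right
    refine ⟨[], root_isVertex t, Or.inl ?_⟩
    rw [des_nil]
    ext x
    constructor
    · rintro (hx | hx)
      · exact des_subset_leafSet t p hx
      · exact hx.1
    · intro hx
      by_cases hxq : x ∈ t.des q
      · exact Or.inl (h hxq)
      · exact Or.inr ⟨hx, hxq⟩

theorem doad_union (t : BTree L) (hnd : t.leafList.Nodup) {D₁ D₂ : Set L}
    (h1 : t.IsDoad D₁) (h2 : t.IsDoad D₂) :
    D₁ ∩ D₂ = ∅ ∨ t.IsDoad (D₁ ∪ D₂) := by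
  obtain ⟨p, hp, hD1⟩ := h1
  obtain ⟨q, hq, hD2⟩ := h2
  rcases hD1 with rfl | rfl <;> rcases hD2 with rfl | rfl
  · rcases des_rel t hnd p q hp hq with h | h | h
    · exact Or.inl h
    · exact Or.inr ⟨q, hq, Or.inl (Set.union_eq_self_of_subset_left h)⟩
    · exact Or.inr ⟨p, hp, Or.inl (Set.union_eq_self_of_subset_right h)⟩
  · exact doad_union_des_anti t hnd p q hp hq
  · rw [Set.inter_comm, Set.union_comm]
    exact doad_union_des_anti t hnd q p hq hp
  · rcases des_rel t hnd p q hp hq with h | h | h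
    · -- disjoint des sets: anti p ∪ anti q = leafSet
      right
      refine ⟨[], root_isVertex t, Or.inl ?_⟩
      rw [des_nil]
      ext x
      constructor
      · rintro (hx | hx) <;> exact hx.1
      · intro hx
        by_cases hxp : x ∈ t.des p
        · exact Or.inr ⟨hx, fun hxq =>
            Set.eq_empty_iff_forall_notMem.mp h x ⟨hxp, hxq⟩⟩
        · exact Or.inl ⟨hx, hxp⟩
    · -- des p ⊆ des q: anti q ⊆ anti p, union = anti p
      right
      refine ⟨p, hp, Or.inr ?_⟩
      apply Set.union_eq_self_of_subset_right
      intro x hx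
      exact ⟨hx.1, fun hp' => hx.2 (h hp')⟩
    · right
      refine ⟨q, hq, Or.inr ?_⟩
      apply Set.union_eq_self_of_subset_left
      intro x hx
      exact ⟨hx.1, fun hq' => hx.2 (h hq')⟩

/-- The list of all vertex paths of a tree. -/
def pathsList : BTree L → List (List Bool)
  | .leaf _ => [[]]
  | .node lt rt =>
      [] :: (lt.pathsList.map (List.cons false) ++ rt.pathsList.map (List.cons true))

theorem mem_pathsList : ∀ {t : BTree L} {p : List Bool}, t.IsVertex p → p ∈ t.pathsList := by
  intro t
  induction t with
  | leaf l =>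
    intro p hp
    cases p with
    | nil => simp [pathsList]
    | cons a p => exact absurd hp (by simp [IsVertex, subtreeAt])
  | node lt rt ihl ihr =>
    intro p hp
    cases p with
    | nil => simp [pathsList]
    | cons a p =>
      cases a
      · have h1 := ihl (p := p) hp
        simp only [pathsList, List.mem_cons, List.mem_append, List.mem_map]
        exact Or.inr (Or.inl ⟨p, h1, rfl⟩)
      · have h1 := ihr (p := p) hp
        simp only [pathsList, List.mem_cons, List.mem_append, List.mem_map]
        exact Or.inr (Or.inr ⟨p, h1, rfl⟩)

theorem leafSet_eq_univ {t : BTree L} (ht : t.IsTreeOn) : t.leafSet = Set.univ :=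
  Set.eq_univ_of_forall fun l => ht.2 l

theorem anti_eq_compl {t : BTree L} (ht : t.IsTreeOn) (p : List Bool) :
    t.anti p = (t.des p)ᶜ := by
  rw [anti, leafSet_eq_univ ht]
  ext x
  simp

theorem f_le_pathsSum (t : BTree L) (f : List Bool → ℕ) {p : List Bool}
    (hp : t.IsVertex p) : f p ≤ ((t.pathsList).map f).sum :=
  List.single_le_sum (fun _ _ => Nat.zero_le _) _ (List.mem_map_of_mem (f := f) (mem_pathsList hp))

end BTree

section FoldrUnion

theorem mem_foldr_union {α : Type*} (l : List (Set α)) (x : α) :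
    x ∈ l.foldr (· ∪ ·) ∅ ↔ ∃ S ∈ l, x ∈ S := by
  induction l with
  | nil => simp
  | cons S l ih => simp [ih]

theorem foldr_union_perm {α : Type*} {l l' : List (Set α)} (h : l.Perm l') :
    l.foldr (· ∪ ·) ∅ = l'.foldr (· ∪ ·) ∅ := by
  ext x
  rw [mem_foldr_union, mem_foldr_union]
  constructor
  · rintro ⟨S, hS, hx⟩
    exact ⟨S, h.mem_iff.mp hS, hx⟩
  · rintro ⟨S, hS, hx⟩
    exact ⟨S, h.mem_iff.mpr hS, hx⟩

theorem iUnion_eq_foldr {α : Type*} (k : ℕ) (F : Fin k → Set α) :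
    (⋃ i, F i) = (List.ofFn F).foldr (· ∪ ·) ∅ := by
  ext x
  rw [mem_foldr_union]
  simp only [Set.mem_iUnion, List.mem_ofFn, Set.mem_range]
  constructor
  · rintro ⟨i, hx⟩
    exact ⟨F i, ⟨i, rfl⟩, hx⟩
  · rintro ⟨S, ⟨i, rfl⟩, hx⟩
    exact ⟨i, hx⟩

end FoldrUnion

section DoadList

variable {L : Type*} [Finite L] (K : Type*) [Field K] (V : L → Type*)
  [∀ l, AddCommGroup (V l)] [∀ l, Module K (V l)] [∀ l, FiniteDimensional K (V l)]

theorem flatRank_doadList_le (T : BTree L) (hnd : T.leafList.Nodup)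
    (t : ⨂[K] l, V l) (M : ℕ) (hM : 1 ≤ M)
    (hbound : ∀ D : Set L, T.IsDoad D → flatRank K V D t ≤ M) :
    ∀ (n : ℕ) (l : List (Set L)), l.length ≤ n → (∀ D ∈ l, T.IsDoad D) →
      flatRank K V (l.foldr (· ∪ ·) ∅) t ≤ M ^ n := by
  classical
  intro n
  induction n with
  | zero =>
    intro l hl _
    obtain rfl : l = [] := List.length_eq_zero_iff.mp (Nat.le_zero.mp hl)
    simpa using flatRank_empty_le K V t
  | succ n ih =>
    intro l hl hdo
    cases l with
    | nil =>
      exact le_trans (by simpa using flatRank_empty_le K V t)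
        (Nat.one_le_pow _ _ (by omega))
    | cons D rest =>
      by_cases hdis : D ∩ (rest.foldr (· ∪ ·) ∅) = ∅
      · have h1 : flatRank K V (D ∪ rest.foldr (· ∪ ·) ∅) t
            ≤ flatRank K V D t * flatRank K V (rest.foldr (· ∪ ·) ∅) t :=
          flatRank_union_le K V _ _
            (fun i hiD hiU => Set.eq_empty_iff_forall_notMem.mp hdis i ⟨hiD, hiU⟩) t
        have h2 : rest.length ≤ n := by
          simpa [Nat.succ_le_succ_iff] using hl
        calc flatRank K V ((D :: rest).foldr (· ∪ ·) ∅) t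
            ≤ flatRank K V D t * flatRank K V (rest.foldr (· ∪ ·) ∅) t := h1
          _ ≤ M * M ^ n := Nat.mul_le_mul (hbound D (hdo D (List.mem_cons_self)))
              (ih rest h2 (fun D' hD' => hdo D' (List.mem_cons_of_mem _ hD')))
          _ = M ^ (n + 1) := (pow_succ' M n).symm
      · obtain ⟨x, hx⟩ := Set.nonempty_iff_ne_empty.mpr hdis
        obtain ⟨D', hD'mem, hxD'⟩ := (mem_foldr_union rest x).mp hx.2
        have hud : T.IsDoad (D ∪ D') := by
          rcases BTree.doad_union T hnd (hdo D (List.mem_cons_self))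
              (hdo D' (List.mem_cons_of_mem _ hD'mem)) with hc | hc
          · exact absurd hc (by
              rw [Set.eq_empty_iff_forall_notMem]
              push_neg
              exact ⟨x, hx.1, hxD'⟩)
          · exact hc
        have hperm : rest.Perm (D' :: rest.erase D') := List.perm_cons_erase hD'mem
        have hfold : ((D ∪ D') :: rest.erase D').foldr (· ∪ ·) ∅
            = ((D :: rest).foldr (· ∪ ·) ∅) := by
          show (D ∪ D') ∪ (rest.erase D').foldr (· ∪ ·) ∅
              = D ∪ rest.foldr (· ∪ ·) ∅
          rw [foldr_union_perm hperm]
          show _ = D ∪ (D' ∪ (rest.erase D').foldr (· ∪ ·) ∅)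
          rw [Set.union_assoc]
        have hlen : ((D ∪ D') :: rest.erase D').length ≤ n := by
          have h0 := List.length_erase_add_one hD'mem
          have h1 : rest.length ≤ n := by simpa [Nat.succ_le_succ_iff] using hl
          simp only [List.length_cons]
          omega
        have hdo' : ∀ D'' ∈ (D ∪ D') :: rest.erase D', T.IsDoad D'' := by
          intro D'' hD''
          rcases List.mem_cons.mp hD'' with rfl | hD''
          · exact hud
          · exact hdo D'' (List.mem_cons_of_mem _ (List.mem_of_mem_erase hD''))
        calc flatRank K V ((D :: rest).foldr (· ∪ ·) ∅) t
            = flatRank K V (((D ∪ D') :: rest.erase D').foldr (· ∪ ·) ∅) t := by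
              rw [hfold]
          _ ≤ M ^ n := ih _ hlen hdo'
          _ ≤ M ^ (n + 1) := Nat.pow_le_pow_right hM (Nat.le_succ n)

end DoadList

universe u v

/-- Asymptotic variant of BBM15, Lemma 3.1: if every `des_{T'} v'` or `anti_{T'} v'`
is a union of at most `c₀` doad sets of `T`, and `c > c₀`, then for all `r ≫ 0`,
`tns(T, (V_l), r·f) ⊆ tns(T', (V_l), r^c·f')`. -/
theorem statement5 {L : Type*} [Finite L] (T T' : BTree L)
    (hT : T.IsTreeOn) (hT' : T'.IsTreeOn)
    (f f' : List Bool → ℕ) (hf : ∀ p, 0 < f p) (hf' : ∀ p, 0 < f' p)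
    (c₀ c : ℕ) (hcc : c₀ < c)
    (hcov : ∀ p', T'.IsVertex p' →
      T.IsUnionOfAtMostDoads c₀ (T'.des p') ∨ T.IsUnionOfAtMostDoads c₀ (T'.anti p')) :
    ∃ r₀ : ℕ, ∀ r : ℕ, r₀ ≤ r →
      ∀ (K : Type u) [Field K] (V : L → Type v)
        [∀ l, AddCommGroup (V l)] [∀ l, Module K (V l)]
        [∀ l, FiniteDimensional K (V l)] (t : ⨂[K] l, V l),
        (∀ p, T.IsVertex p → flatRank K V (T.des p) t ≤ r * f p) →
        ∀ p', T'.IsVertex p' → flatRank K V (T'.des p') t ≤ r ^ c * f' p' := by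
  classical
  set Fs := ((T.pathsList).map f).sum with hFs
  have hFs1 : 1 ≤ Fs := le_trans (hf []) (BTree.f_le_pathsSum T f (BTree.root_isVertex T))
  refine ⟨Fs ^ c₀, ?_⟩
  intro r hr K _ V _ _ _ t hdes p' hp'
  have hr1 : 1 ≤ r := le_trans (Nat.one_le_pow _ _ (by omega)) hr
  set M := r * Fs with hM
  have hM1 : 1 ≤ M := by
    have := Nat.mul_le_mul hr1 hFs1
    simpa using this
  have hbound : ∀ D : Set L, T.IsDoad D → flatRank K V D t ≤ M := by
    rintro D ⟨p, hp, rfl | rfl⟩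
    · exact le_trans (hdes p hp) (Nat.mul_le_mul le_rfl (BTree.f_le_pathsSum T f hp))
    · rw [BTree.anti_eq_compl hT p]
      exact le_trans (flatRank_compl_le K V (T.des p) t)
        (le_trans (hdes p hp) (Nat.mul_le_mul le_rfl (BTree.f_le_pathsSum T f hp)))
  have main : ∀ S : Set L, T.IsUnionOfAtMostDoads c₀ S → flatRank K V S t ≤ M ^ c₀ := by
    rintro S ⟨k, F, hk, hdo, rfl⟩
    rw [iUnion_eq_foldr k F]
    refine flatRank_doadList_le K V T hT.1 t M hM1 hbound c₀ (List.ofFn F)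
      (by simpa using hk) ?_
    intro D hD
    obtain ⟨i, rfl⟩ := List.mem_ofFn.mp hD
    exact hdo i
  have hfinal : flatRank K V (T'.des p') t ≤ M ^ c₀ := by
    rcases hcov p' hp' with h | h
    · exact main _ h
    · have h1 : T'.des p' = (T'.anti p')ᶜ := by
        rw [BTree.anti_eq_compl hT' p', compl_compl]
      rw [h1]
      exact le_trans (flatRank_compl_le K V (T'.anti p') t) (main _ h)
  refine le_trans hfinal ?_
  calc M ^ c₀ = r ^ c₀ * Fs ^ c₀ := mul_pow r Fs c₀
    _ ≤ r ^ c₀ * r := Nat.mul_le_mul le_rfl hr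
    _ = r ^ (c₀ + 1) := (pow_succ r c₀).symm
    _ ≤ r ^ c := Nat.pow_le_pow_right hr1 (by omega)
    _ ≤ r ^ c * f' p' := Nat.le_mul_of_pos_right _ (hf' p')

end TNS
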